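/- arXiv:1606.03931 — 2 statements merged into one kernel-verified Lean document; each statement's English description precedes it below -/
import Mathlib

section
/- Let A be an invertible n×n real matrix, 1 ≤ l < n, and let A_l be the n×l matrix of the first l columns of A. For every y ∈ ℝ^l, setting X = A_l y and U = X − P_l X, one has ‖A^{−1}U‖₂² = ‖y‖₂² + ‖A^{−1}P_l X‖₂², and moreover ‖A^{−1}P_l X‖₂² = Σ_{k=l+1}^n ⟨X, Y_k*⟩² = ‖B X‖₂². -/
open Matrix

noncomputable section

/-- `k`-th column of a matrix, as a vector of `EuclideanSpace ℝ (Fin n)`. -/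
def col {n m : ℕ} (A : Matrix (Fin n) (Fin m) ℝ) (k : Fin m) : EuclideanSpace ℝ (Fin n) :=
  WithLp.toLp 2 (fun i => A i k)

/-- A plain vector viewed in `EuclideanSpace ℝ (Fin n)`. -/
def toE {n : ℕ} (x : Fin n → ℝ) : EuclideanSpace ℝ (Fin n) := WithLp.toLp 2 x

/-- The `n × l` matrix of the first `l` columns of `A` (junk `0` columns if `l > n`). -/
def firstCols {n : ℕ} (A : Matrix (Fin n) (Fin n) ℝ) (l : ℕ) : Matrix (Fin n) (Fin l) ℝ :=
  fun i j => if h : (j : ℕ) < n then A i ⟨j, h⟩ else 0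

/-- The `n × (n-l)` matrix of the last `n - l` columns of `A`. -/
def lastCols {n : ℕ} (A : Matrix (Fin n) (Fin n) ℝ) (l : ℕ) : Matrix (Fin n) (Fin (n - l)) ℝ :=
  fun i j => A i ⟨l + j, by have := j.isLt; omega⟩

/-- `H_l`: the span of the last `n - l` columns of `A`, i.e. the columns `X_k` with
(0-based) index `k ≥ l` (paper's 1-based indices `k > l`). -/
def Hspan {n : ℕ} (A : Matrix (Fin n) (Fin n) ℝ) (l : ℕ) :
    Submodule ℝ (EuclideanSpace ℝ (Fin n)) :=
  Submodule.span ℝ (col A '' {k | l ≤ (k : ℕ)})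

/-- `H_{l,k}`: the span of the columns `X_j` with (0-based) index `j ≥ l`, `j ≠ k`. -/
def Hspan' {n : ℕ} (A : Matrix (Fin n) (Fin n) ℝ) (l : ℕ) (k : Fin n) :
    Submodule ℝ (EuclideanSpace ℝ (Fin n)) :=
  Submodule.span ℝ (col A '' {j | l ≤ (j : ℕ) ∧ j ≠ k})

/-- `Y_k* = P_l X_k*`, where `X_k*` is the `k`-th column of `(A⁻¹)ᵀ` and `P_l` is the
orthogonal projection onto `H_l`. -/
def Ystar {n : ℕ} (A : Matrix (Fin n) (Fin n) ℝ) (l : ℕ) (k : Fin n) :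
    EuclideanSpace ℝ (Fin n) :=
  ↑(Submodule.orthogonalProjectionOnto (Hspan A l) (col A⁻¹ᵀ k))

/-- The `(n-l) × n` matrix `B` whose rows are `(Y_k*)ᵀ` for `k` ranging over the last
`n - l` indices. -/
def Bmat {n : ℕ} (A : Matrix (Fin n) (Fin n) ℝ) (l : ℕ) : Matrix (Fin (n - l)) (Fin n) ℝ :=
  fun r i => Ystar A l ⟨l + r, by have := r.isLt; omega⟩ i

/-- Squared Hilbert–Schmidt (Frobenius) norm of a matrix. -/
def hsNormSq {n m : ℕ} (B : Matrix (Fin m) (Fin n) ℝ) : ℝ :=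
  ∑ r, ∑ i, (B r i) ^ 2

/-- Hilbert–Schmidt (Frobenius) norm of a matrix. -/
def hsNorm {n m : ℕ} (B : Matrix (Fin m) (Fin n) ℝ) : ℝ :=
  Real.sqrt (hsNormSq B)

/-- Operator (`ℓ² → ℓ²`) norm of a matrix, as the supremum of `‖Bx‖₂` over the unit
sphere. -/
def opNorm {n m : ℕ} (B : Matrix (Fin m) (Fin n) ℝ) : ℝ :=
  sSup ((fun x : EuclideanSpace ℝ (Fin n) => ‖toE (B *ᵥ fun i => x i)‖) '' {x | ‖x‖ = 1})

open scoped RealInnerProductSpace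

/-!
The rows of `A⁻¹` are the vectors `X_k*`, dual to the columns: `⟪X_j, X_k*⟫ = δ_jk`. Hence
`A⁻¹ v = (⟪v, X_k*⟫)_k` is the coordinate vector of `v` in the basis `(X_k)`. The coordinates of
`X = A_l y` are `y` padded with zeros, while those of `P_l X ∈ H_l` vanish at the first `l`
indices; so `A⁻¹ U = A⁻¹ X - A⁻¹ P_l X` is a difference of vectors with disjoint supports, and
Pythagoras gives the first identity. Since `P_l` is self-adjoint,
`⟪P_l X, X_k*⟫ = ⟪X, P_l X_k*⟫ = ⟪X, Y_k*⟫`, which gives the other two.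
-/

section Coordinates

variable {m n : ℕ}

lemma norm_toE_sq (v : Fin n → ℝ) : ‖toE v‖ ^ 2 = ∑ i, v i ^ 2 := by
  simp [toE, EuclideanSpace.norm_sq_eq]

lemma norm_toE_sub_sq_of_mul_eq_zero {v w : Fin n → ℝ} (h : ∀ i, v i * w i = 0) :
    ‖toE (v - w)‖ ^ 2 = ‖toE v‖ ^ 2 + ‖toE w‖ ^ 2 := by
  simp only [norm_toE_sq, ← Finset.sum_add_distrib, Pi.sub_apply]
  refine Finset.sum_congr rfl fun i _ => ?_
  linear_combination (-2 : ℝ) * h i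

lemma norm_toE_extend_sq {e : Fin m → Fin n} (he : Function.Injective e) (v : Fin m → ℝ) :
    ‖toE (Function.extend e v 0)‖ ^ 2 = ‖toE v‖ ^ 2 := by
  rw [norm_toE_sq, norm_toE_sq]
  refine (Fintype.sum_of_injective e he _ _ (fun i hi => ?_) fun j => ?_).symm
  · simp [Function.extend_apply' _ _ _ fun ⟨j, hj⟩ => hi ⟨j, hj⟩]
  · rw [he.extend_apply]

lemma mulVec_apply_eq_inner_col_transpose (M : Matrix (Fin m) (Fin n) ℝ)
    (v : EuclideanSpace ℝ (Fin n)) (k : Fin m) :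
    (M *ᵥ fun i => v i) k = ⟪v, _root_.col Mᵀ k⟫ := by
  simp [mulVec, dotProduct, _root_.col, PiLp.inner_apply]

end Coordinates

section Columns

variable {n l : ℕ} (A : Matrix (Fin n) (Fin n) ℝ)

lemma firstCols_mulVec (hln : l ≤ n) (y : Fin l → ℝ) :
    firstCols A l *ᵥ y = A *ᵥ Function.extend (Fin.castLE hln) y 0 := by
  ext i
  refine Fintype.sum_of_injective _ (Fin.castLE_injective hln) _ _ (fun k hk => ?_) fun j => ?_
  · simp [Function.extend_apply' _ _ _ hk]
  · rw [(Fin.castLE_injective hln).extend_apply]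
    exact congrArg (· * y j) (dif_pos (lt_of_lt_of_le j.isLt hln))

lemma inv_mulVec_mulVec (hA : IsUnit A) (v : Fin n → ℝ) : A⁻¹ *ᵥ (A *ᵥ v) = v := by
  rw [mulVec_mulVec, nonsing_inv_mul A ((isUnit_iff_isUnit_det A).mp hA), one_mulVec]

lemma inv_mulVec_apply_eq_zero_of_mem_Hspan (hA : IsUnit A) {w : EuclideanSpace ℝ (Fin n)}
    (hw : w ∈ Hspan A l) {k : Fin n} (hk : (k : ℕ) < l) : (A⁻¹ *ᵥ fun i => w i) k = 0 := by
  suffices Hspan A l ≤ (ℝ ∙ _root_.col A⁻¹ᵀ k)ᗮ by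
    rw [mulVec_apply_eq_inner_col_transpose]
    exact Submodule.mem_orthogonal_singleton_iff_inner_left.mp (this hw)
  refine Submodule.span_le.mpr ?_
  rintro _ ⟨j, hj, rfl⟩
  have hkj : j ≠ k := by rintro rfl; exact absurd hj (not_le.mpr hk)
  rw [SetLike.mem_coe, Submodule.mem_orthogonal_singleton_iff_inner_left,
    ← mulVec_apply_eq_inner_col_transpose,
    show (fun i => _root_.col A j i) = A *ᵥ Pi.single j 1 from (mulVec_single_one A j).symm,
    inv_mulVec_mulVec A hA, Pi.single_eq_of_ne hkj.symm]

lemma inner_Ystar (x : EuclideanSpace ℝ (Fin n)) (k : Fin n) :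
    ⟪x, Ystar A l k⟫ = (A⁻¹ *ᵥ fun i => (Hspan A l).starProjection x i) k := by
  rw [mulVec_apply_eq_inner_col_transpose, Ystar, Submodule.coe_orthogonalProjectionOnto_apply,
    Submodule.inner_starProjection_left_eq_right]

lemma Bmat_mulVec_apply (x : EuclideanSpace ℝ (Fin n)) (r : Fin (n - l)) :
    (Bmat A l *ᵥ fun i => x i) r = ⟪x, Ystar A l ⟨l + r, by omega⟩⟫ :=
  mulVec_apply_eq_inner_col_transpose _ x r

end Columns

lemma Fin.sum_filter_le_val_eq_sum {M : Type*} [AddCommMonoid M] {n : ℕ} (l : ℕ)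
    (f : Fin n → M) :
    ∑ k ∈ Finset.univ.filter (fun k : Fin n => l ≤ (k : ℕ)), f k =
      ∑ r : Fin (n - l), f ⟨l + r, by omega⟩ := by
  refine (Finset.sum_nbij (fun r : Fin (n - l) => (⟨l + r, by omega⟩ : Fin n)) ?_ ?_ ?_
    fun _ _ => rfl).symm
  · simp
  · intro a _ b _ h; simpa [Fin.ext_iff] using h
  · intro k hk
    simp only [Finset.coe_filter, Finset.mem_univ, true_and, Set.mem_ofPred_eq] at hk
    exact ⟨⟨k - l, by omega⟩, by simp, by ext; simp; omega⟩

theorem inv_apply_perp_component_sq_general (n l : ℕ) (hln : l < n)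
    (A : Matrix (Fin n) (Fin n) ℝ) (hA : IsUnit A) (y : EuclideanSpace ℝ (Fin l))
    (X PlX U : EuclideanSpace ℝ (Fin n))
    (hX : X = toE (firstCols A l *ᵥ fun j => y j))
    (hP : PlX = ↑(Submodule.orthogonalProjectionOnto (Hspan A l) X))
    (hU : U = X - PlX) :
    ‖toE (A⁻¹ *ᵥ fun i => U i)‖ ^ 2 = ‖y‖ ^ 2 + ‖toE (A⁻¹ *ᵥ fun i => PlX i)‖ ^ 2 ∧
    ‖toE (A⁻¹ *ᵥ fun i => PlX i)‖ ^ 2 =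
      ∑ k ∈ Finset.univ.filter (fun k : Fin n => l ≤ (k : ℕ)), ⟪X, Ystar A l k⟫ ^ 2 ∧
    (∑ k ∈ Finset.univ.filter (fun k : Fin n => l ≤ (k : ℕ)), ⟪X, Ystar A l k⟫ ^ 2) =
      ‖toE (Bmat A l *ᵥ fun i => X i)‖ ^ 2 := by
  set e := Fin.castLE hln.le
  have hPX : (A⁻¹ *ᵥ fun i => PlX i) = fun k => ⟪X, Ystar A l k⟫ := by
    ext k; rw [inner_Ystar, hP]; rfl
  have hPX_zero : ∀ k : Fin n, (k : ℕ) < l → ⟪X, Ystar A l k⟫ = 0 := fun k hk => by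
    rw [← congrFun hPX k]
    exact inv_mulVec_apply_eq_zero_of_mem_Hspan A hA (hP ▸ Submodule.coe_mem _) hk
  have hX_coords : (A⁻¹ *ᵥ fun i => X i) = Function.extend e (fun j => y j) 0 := by
    rw [hX]; exact (congrArg _ (firstCols_mulVec A hln.le _)).trans (inv_mulVec_mulVec A hA _)
  have hU_coords : (A⁻¹ *ᵥ fun i => U i) =
      Function.extend e (fun j => y j) 0 - fun k => ⟪X, Ystar A l k⟫ := by
    rw [← hX_coords, ← hPX, ← mulVec_sub, hU]; rfl
  refine ⟨?_, ?_, ?_⟩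
  · rw [hU_coords, norm_toE_sub_sq_of_mul_eq_zero, norm_toE_extend_sq (Fin.castLE_injective _),
      hPX]
    · rfl
    intro k
    by_cases hk : k ∈ Set.range e
    · obtain ⟨j, rfl⟩ := hk
      rw [hPX_zero _ j.isLt, mul_zero]
    · rw [Function.extend_apply' _ _ _ hk, Pi.zero_apply, zero_mul]
  · rw [hPX, norm_toE_sq, Finset.sum_filter_of_ne fun k _ hk => ?_]
    contrapose! hk
    simp [hPX_zero k hk]
  · rw [Fin.sum_filter_le_val_eq_sum, norm_toE_sq]
    simp_rw [Bmat_mulVec_apply]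

/-- **Key identity of the proof.** For an invertible `n × n` matrix `A`, `1 ≤ l < n` and
`y ∈ ℝ^l`, with `X = A_l y` and `U = X - P_l X`:
`‖A⁻¹U‖₂² = ‖y‖₂² + ‖A⁻¹ P_l X‖₂²`, and
`‖A⁻¹ P_l X‖₂² = Σ_{k>l} ⟪X, Y_k*⟫² = ‖B X‖₂²`. -/
theorem inv_apply_perp_component_sq (n l : ℕ) (hl : 1 ≤ l) (hln : l < n)
    (A : Matrix (Fin n) (Fin n) ℝ) (hA : IsUnit A) (y : EuclideanSpace ℝ (Fin l))
    (X PlX U : EuclideanSpace ℝ (Fin n))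
    (hX : X = toE (firstCols A l *ᵥ fun j => y j))
    (hP : PlX = ↑(Submodule.orthogonalProjectionOnto (Hspan A l) X))
    (hU : U = X - PlX) :
    ‖toE (A⁻¹ *ᵥ fun i => U i)‖ ^ 2 = ‖y‖ ^ 2 + ‖toE (A⁻¹ *ᵥ fun i => PlX i)‖ ^ 2 ∧
    ‖toE (A⁻¹ *ᵥ fun i => PlX i)‖ ^ 2 =
      ∑ k ∈ Finset.univ.filter (fun k : Fin n => l ≤ (k : ℕ)), ⟪X, Ystar A l k⟫ ^ 2 ∧
    (∑ k ∈ Finset.univ.filter (fun k : Fin n => l ≤ (k : ℕ)), ⟪X, Ystar A l k⟫ ^ 2) =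
      ‖toE (Bmat A l *ᵥ fun i => X i)‖ ^ 2 :=
  inv_apply_perp_component_sq_general n l hln A hA y X PlX U hX hP hU

end
end

section
/- Let A be an invertible n×n real matrix and 1 ≤ l < n, and let A_{n−l} be the n×(n−l) matrix of the last n−l columns of A. Then the operator norm of B equals the reciprocal of the smallest singular value of A_{n−l}: ‖B‖ = 1 / s_{min}(A_{n−l}), where s_{min}(A_{n−l}) = min_{z ∈ S^{n−l−1}} ‖A_{n−l} z‖₂. -/
open Matrix

noncomputable section

/-!
Write `T = A_{n-l}` and `H = H_l`, which lies in the range of `T`. Since `⟨X_k*, X_j⟩ = δ_kj` and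
`X_j ∈ H` for `j ≥ l`, the rows `Y_k* = P_l X_k*` satisfy `B T = 1`, and they lie in `H`, so `B`
kills `(range T)ᗮ`. Thus `B x = B (P x) = z` where `P x = T z`, and
`s_min ‖z‖ ≤ ‖T z‖ = ‖P x‖ ≤ ‖x‖` gives `‖B‖ ≤ 1 / s_min`; the bound is attained at
`x = T z₀ / s_min` for a minimiser `z₀` of `‖T z‖` on the unit sphere.
-/

open Metric

section LeftInverse

variable {E F : Type*} [NormedAddCommGroup E] [NormedAddCommGroup F]

theorem LinearMap.sInf_norm_image_sphere_mul_norm_le [NormedSpace ℝ E] [NormedSpace ℝ F]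
    (T : E →ₗ[ℝ] F) (z : E) :
    sInf ((‖T ·‖) '' sphere 0 1) * ‖z‖ ≤ ‖T z‖ := by
  rcases eq_or_ne z 0 with rfl | hz
  · simp
  have hz' : 0 < ‖z‖ := norm_pos_iff.2 hz
  have hmem : ‖T (‖z‖⁻¹ • z)‖ ∈ (‖T ·‖) '' sphere 0 1 :=
    ⟨_, by simp [norm_smul, hz'.ne'], rfl⟩
  have := csInf_le ⟨0, by rintro _ ⟨_, _, rfl⟩; positivity⟩ hmem
  rw [map_smul, norm_smul, norm_inv, norm_norm] at this
  rwa [← le_div_iff₀ hz', div_eq_inv_mul]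

theorem LinearMap.exists_mem_sphere_norm_eq_sInf [NormedSpace ℝ E] [NormedSpace ℝ F]
    [FiniteDimensional ℝ E] [Nontrivial E] (T : E →ₗ[ℝ] F) :
    ∃ z ∈ sphere (0 : E) 1, ‖T z‖ = sInf ((‖T ·‖) '' sphere 0 1) := by
  obtain ⟨z, hz, h⟩ := (isCompact_sphere (0 : E) 1).exists_sInf_image_eq
    (NormedSpace.sphere_nonempty.2 zero_le_one)
    (T.continuous_of_finiteDimensional.norm.continuousOn)
  exact ⟨z, hz, h.symm⟩

variable [InnerProductSpace ℝ E] [InnerProductSpace ℝ F] [FiniteDimensional ℝ E]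

theorem isGreatest_norm_image_sphere_of_leftInverse [Nontrivial E]
    (T : E →ₗ[ℝ] F) (B : F →ₗ[ℝ] E) (hBT : ∀ z, B (T z) = z)
    (hB : ∀ x ∈ (LinearMap.range T)ᗮ, B x = 0) :
    IsGreatest ((‖B ·‖) '' sphere 0 1) (sInf ((‖T ·‖) '' sphere 0 1))⁻¹ := by
  obtain ⟨z₀, hz₀, hTz₀⟩ := T.exists_mem_sphere_norm_eq_sInf
  rw [mem_sphere_zero_iff_norm] at hz₀
  rw [← hTz₀]
  set m := ‖T z₀‖
  have hm : 0 < m := by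
    rw [norm_pos_iff]
    intro h
    simpa [h, hz₀] using congrArg norm (hBT z₀)
  refine ⟨⟨m⁻¹ • T z₀, ?_, ?_⟩, ?_⟩
  · simp [m, norm_smul, hm.ne']
  · simp [hBT, norm_smul, hz₀, hm.le]
  rintro _ ⟨x, hx, rfl⟩
  rw [mem_sphere_zero_iff_norm] at hx
  let K := LinearMap.range T
  obtain ⟨z, hz⟩ : K.starProjection x ∈ LinearMap.range T := K.starProjection_apply_mem x
  have hBx : B x = z := by
    rw [← hBT z, hz, ← sub_eq_zero, ← map_sub]
    exact hB _ (K.sub_starProjection_mem_orthogonal x)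
  have : m * ‖z‖ ≤ 1 := calc
    m * ‖z‖ ≤ ‖T z‖ := hTz₀ ▸ T.sInf_norm_image_sphere_mul_norm_le z
    _ = ‖K.starProjection x‖ := by rw [hz]
    _ ≤ 1 := hx ▸ K.norm_starProjection_apply_le x
  simp only [hBx]
  rwa [← one_div, le_div_iff₀' hm]

end LeftInverse

open scoped RealInnerProductSpace

section Bmat

variable {n : ℕ} (A : Matrix (Fin n) (Fin n) ℝ) (l : ℕ)

theorem image_norm_toE_mulVec_eq {m : ℕ} (M : Matrix (Fin m) (Fin n) ℝ) :
    (fun x : EuclideanSpace ℝ (Fin n) => ‖toE (M *ᵥ fun i => x i)‖) '' {x | ‖x‖ = 1} =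
      (‖toEuclideanLin M ·‖) '' sphere 0 1 := by
  congr 1
  ext x
  simp

theorem Ystar_mem_Hspan (k : Fin n) : Ystar A l k ∈ Hspan A l :=
  Submodule.coe_mem _

theorem inner_Ystar_col (hA : IsUnit A) (k j : Fin n) (hj : l ≤ (j : ℕ)) :
    ⟪Ystar A l k, _root_.col A j⟫ = (1 : Matrix (Fin n) (Fin n) ℝ) k j := by
  have hcol : _root_.col A j ∈ Hspan A l := Submodule.subset_span ⟨j, hj, rfl⟩
  rw [Ystar, ← Submodule.starProjection_apply, Submodule.inner_starProjection_left_eq_right,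
    Submodule.starProjection_eq_self_iff.2 hcol,
    ← Matrix.nonsing_inv_mul A ((isUnit_iff_isUnit_det A).1 hA)]
  simp [_root_.col, PiLp.inner_apply, Matrix.mul_apply, mul_comm]

theorem Bmat_mul_lastCols (hA : IsUnit A) : Bmat A l * lastCols A l = 1 := by
  ext r j
  calc (Bmat A l * lastCols A l) r j
      = ⟪Ystar A l ⟨l + r, by omega⟩, _root_.col A ⟨l + j, by omega⟩⟫ := by
        simp [Matrix.mul_apply, PiLp.inner_apply, Bmat, lastCols, _root_.col, mul_comm]
    _ = (1 : Matrix (Fin (n - l)) (Fin (n - l)) ℝ) r j := by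
        rw [inner_Ystar_col A l hA _ _ (by simp)]
        simp [Matrix.one_apply, Fin.ext_iff]

theorem Hspan_le_range_lastCols : Hspan A l ≤ LinearMap.range (toEuclideanLin (lastCols A l)) := by
  rw [Hspan, Submodule.span_le]
  rintro _ ⟨k, hk, rfl⟩
  simp only [Set.mem_ofPred_eq] at hk
  refine ⟨EuclideanSpace.single ⟨k - l, by omega⟩ 1, ?_⟩
  ext i
  simp only [ofLp_toLpLin, PiLp.ofLp_single, toLin'_apply, mulVec_single, MulOpposite.op_one,
    Pi.smul_apply, col_apply, lastCols, one_smul, _root_.col]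
  exact congrArg (A i) (Fin.ext (Nat.add_sub_cancel' hk))

theorem toEuclideanLin_Bmat_eq_zero {x : EuclideanSpace ℝ (Fin n)} (hx : x ∈ (Hspan A l)ᗮ) :
    toEuclideanLin (Bmat A l) x = 0 := by
  ext r
  have := (Submodule.mem_orthogonal' _ _).1 hx _ (Ystar_mem_Hspan A l ⟨l + r, by omega⟩)
  simpa [PiLp.inner_apply, Bmat, Matrix.mulVec, dotProduct, mul_comm] using this

end Bmat

theorem opNorm_Bmat_eq_inv_smin_general (n l : ℕ) (hln : l < n)
    (A : Matrix (Fin n) (Fin n) ℝ) (hA : IsUnit A) :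
    opNorm (Bmat A l) =
      1 / sInf ((fun z : EuclideanSpace ℝ (Fin (n - l)) =>
          ‖toE (lastCols A l *ᵥ fun j => z j)‖) '' {z | ‖z‖ = 1}) := by
  have : Nontrivial (EuclideanSpace ℝ (Fin (n - l))) := by
    have : Nonempty (Fin (n - l)) := ⟨⟨0, by omega⟩⟩
    infer_instance
  have hBT (z : EuclideanSpace ℝ (Fin (n - l))) :
      toEuclideanLin (Bmat A l) (toEuclideanLin (lastCols A l) z) = z := by
    rw [← LinearMap.comp_apply, ← toLpLin_mul_same, Bmat_mul_lastCols A l hA, toLpLin_one,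
      LinearMap.id_apply]
  have hB (x) (hx : x ∈ (LinearMap.range (toEuclideanLin (lastCols A l)))ᗮ) :
      toEuclideanLin (Bmat A l) x = 0 :=
    toEuclideanLin_Bmat_eq_zero A l (Submodule.orthogonal_le (Hspan_le_range_lastCols A l) hx)
  rw [opNorm, image_norm_toE_mulVec_eq, image_norm_toE_mulVec_eq, one_div]
  exact (isGreatest_norm_image_sphere_of_leftInverse _ _ hBT hB).csSup_eq

/-- **Step 1.2.2 identity.** For an invertible `n × n` matrix `A` and `1 ≤ l < n`, the
operator norm of `B` is the reciprocal of the smallest singular value of the `n × (n-l)`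
matrix `A_{n-l}` of the last `n - l` columns of `A`:
`‖B‖ = 1 / min_{z ∈ S^{n-l-1}} ‖A_{n-l} z‖₂`. -/
theorem opNorm_Bmat_eq_inv_smin (n l : ℕ) (hl : 1 ≤ l) (hln : l < n)
    (A : Matrix (Fin n) (Fin n) ℝ) (hA : IsUnit A) :
    opNorm (Bmat A l) =
      1 / sInf ((fun z : EuclideanSpace ℝ (Fin (n - l)) =>
          ‖toE (lastCols A l *ᵥ fun j => z j)‖) '' {z | ‖z‖ = 1}) :=
  opNorm_Bmat_eq_inv_smin_general n l hln A hA

end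
end
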